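/- arXiv:2210.04773 — 4 statements merged into one kernel-verified Lean document; each statement's English description precedes it below -/
import Mathlib

section
/- In a braided multiplicative vertex coalgebra, colocality holds: (Š(w/z) ⊗ id)(id ⊗ Y(w))Y(z) ≡ (id ⊗ Y(z))Y(w). -/
open scoped TensorProduct

/-!
STATEMENT 6: In a braided multiplicative vertex coalgebra, colocality holds:
  (Š(w/z) ⊗ id)(id ⊗ Y(w))Y(z) ≡ (id ⊗ Y(z))Y(w).
Formal variables z, w range over an abstract commutative group G (so w/z = w * z⁻¹),
and the composite on the left is written with the associator isomorphisms inserted so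
that Š(w/z) ⊗ id acts on the first two tensor factors.  Hypotheses: weak
coassociativity, skew symmetry Š(z⁻¹)Y(z) = Y(z⁻¹)D(z), and translation covariance
(D(z) ⊗ id)Y(w) = Y(zw).
-/
theorem vertex_coalgebra_colocality
    (R V G : Type*) [CommRing R] [AddCommGroup V] [Module R V] [CommGroup G]
    (D : G → V →ₗ[R] V)
    (Y : G → V →ₗ[R] V ⊗[R] V)
    (Sb : G → V ⊗[R] V →ₗ[R] V ⊗[R] V)
    -- weak coassociativity
    (hweak : ∀ z w, (TensorProduct.assoc R V V V).toLinearMap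
        ∘ₗ LinearMap.rTensor V (Y z) ∘ₗ Y w
      = LinearMap.lTensor V (Y w) ∘ₗ Y (z * w))
    -- skew symmetry
    (hskew : ∀ z, Sb z⁻¹ ∘ₗ Y z = Y z⁻¹ ∘ₗ D z)
    -- translation covariance
    (htc : ∀ z w, LinearMap.rTensor V (D z) ∘ₗ Y w = Y (z * w)) :
    ∀ z w,
      (TensorProduct.assoc R V V V).toLinearMap
        ∘ₗ LinearMap.rTensor V (Sb (w * z⁻¹))
        ∘ₗ (TensorProduct.assoc R V V V).symm.toLinearMap
        ∘ₗ LinearMap.lTensor V (Y w) ∘ₗ Y z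
      = LinearMap.lTensor V (Y z) ∘ₗ Y w := by
  intro z w
  have h1 : LinearMap.lTensor V (Y w) ∘ₗ Y z
      = (TensorProduct.assoc R V V V).toLinearMap
        ∘ₗ LinearMap.rTensor V (Y (z * w⁻¹)) ∘ₗ Y w := by
    have := hweak (z * w⁻¹) w
    rw [inv_mul_cancel_right] at this
    exact this.symm
  rw [h1]
  have h2 : (TensorProduct.assoc R V V V).symm.toLinearMap
      ∘ₗ ((TensorProduct.assoc R V V V).toLinearMap
        ∘ₗ LinearMap.rTensor V (Y (z * w⁻¹)) ∘ₗ Y w)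
      = LinearMap.rTensor V (Y (z * w⁻¹)) ∘ₗ Y w := by
    rw [← LinearMap.comp_assoc ((LinearMap.rTensor V (Y (z * w⁻¹))) ∘ₗ Y w)]
    simp [LinearEquiv.comp_coe]
  rw [h2]
  have h3 : LinearMap.rTensor V (Sb (w * z⁻¹))
      ∘ₗ LinearMap.rTensor V (Y (z * w⁻¹)) ∘ₗ Y w
      = LinearMap.rTensor V (Y (w * z⁻¹)) ∘ₗ Y z := by
    rw [← LinearMap.comp_assoc, ← LinearMap.rTensor_comp]
    have hs : Sb (w * z⁻¹) ∘ₗ Y (z * w⁻¹) = Y (w * z⁻¹) ∘ₗ D (z * w⁻¹) := by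
      have := hskew (z * w⁻¹)
      simpa [mul_inv_rev, mul_comm] using this
    rw [hs, LinearMap.rTensor_comp, LinearMap.comp_assoc, htc]
    rw [inv_mul_cancel_right]
  rw [h3]
  have := hweak (w * z⁻¹) z
  rw [inv_mul_cancel_right] at this
  exact this
end

section
/- Suppose Θ_{α,β}(z) are invertible elements of commutative rings R(α)⊗R(β)((z^{-1})) satisfying the braiding property Š_{α,β}(z^{-1})Θ_{α,β}(z) = Θ_{β,α}(z^{-1}) where Š_{α,β}(z) = (Θ_{β,α}(z)/(12)*Θ_{α,β}(z^{-1}))·(12). Then the vertex coproduct Y_{α,β}(z) = Θ_{α,β}(z) ⊗ z^{deg₁}Φ*_{α,β} satisfies skew symmetry Š_{α,β}(z^{-1})Y_{α,β}(z) = Y_{β,α}(z^{-1})D(z), given that z^{deg}Φ* = Φ*z^{deg}, z^{deg} = z^{deg₁}z^{deg₂}, and D(z) = z^{deg}. -/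
/-!
STATEMENT 8: Skew symmetry of the geometric vertex coproduct.  Model: the K-groups
K(𝔐(α+β)) and K(𝔐(α)×𝔐(β)) are commutative rings A and B (all classes Θ being units);
the swap (12) : R(α)⊗R(β) → R(β)⊗R(α) is realized as a ring involution σ of B; the
pullback Φ* : A → B is a ring homomorphism; z^{deg} on A is DA(z); z^{deg₁}, z^{deg₂}
on B are e1(z), e2(z); the formal variable z ranges over a commutative group G.
  Y_{α,β}(z) a   = Θ(z) · e1(z)(Φ*(a)),
  Y_{β,α}(z) a   = Θ'(z) · σ(e2(z)(Φ*(a)))   (since Φ*_{β,α} = σ∘Φ* and the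
                                              first-factor grading on the swapped
                                              side is σ∘e2(z)∘σ, and σ∘σ = id),
  Š_{α,β}(z) b   = Θ'(z) · σ(Θ(z⁻¹))⁻¹ · σ(b),
  D(z) = z^{deg} = DA(z).
Hypotheses: the braiding property Š(z⁻¹)Θ(z) = Θ'(z⁻¹); z^{deg}Φ* = Φ*z^{deg} with
z^{deg} = z^{deg₁}z^{deg₂} (hdeg); e2 is a multiplicative family; e1, e2 commute.
Conclusion (skew symmetry): Š_{α,β}(z⁻¹)(Y_{α,β}(z) a) = Y_{β,α}(z⁻¹)(D(z) a).
-/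
theorem geometric_skew_symmetry
    (G A B : Type*) [CommGroup G] [CommRing A] [CommRing B]
    (Φ : A →+* B) (σ : B ≃+* B) (hσ : ∀ b, σ (σ b) = b)
    (DA : G → A ≃+* A) (e1 e2 : G → B ≃+* B)
    (Θ Θ' : G → Bˣ)
    (Y Y' : G → A → B) (Sb : G → B → B)
    (hY : ∀ z a, Y z a = (Θ z : B) * e1 z (Φ a))
    (hY' : ∀ z a, Y' z a = (Θ' z : B) * σ (e2 z (Φ a)))
    (hSb : ∀ z b, Sb z b = (Θ' z : B) * σ ((↑(Θ z⁻¹)⁻¹ : B)) * σ b)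
    -- braiding property Š_{α,β}(z⁻¹)Θ_{α,β}(z) = Θ_{β,α}(z⁻¹)
    (hbraid : ∀ z, Sb z⁻¹ (Θ z : B) = (Θ' z⁻¹ : B))
    -- z^{deg}Φ* = Φ* z^{deg}, where z^{deg} = z^{deg₁} z^{deg₂}
    (hdeg : ∀ z a, e1 z (e2 z (Φ a)) = Φ (DA z a))
    (he2mul : ∀ z w b, e2 z (e2 w b) = e2 (z * w) b)
    (he2one : ∀ b, e2 1 b = b)
    (hcomm12 : ∀ z w b, e1 z (e2 w b) = e2 w (e1 z b)) :
    ∀ z a, Sb z⁻¹ (Y z a) = Y' z⁻¹ (DA z a) := by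
  intro z a
  rw [hY, hSb, hY', ← hdeg, hcomm12, he2mul, inv_mul_cancel, he2one, inv_inv, map_mul,
    mul_assoc, ← mul_assoc (σ _), ← map_mul, Units.inv_mul, map_one, one_mul]
end

section
/- With the setup of the geometric vertex coproduct, weak coassociativity holds: (Y_{α,β}(z) ⊗ id)Y_{α+β,γ}(w) = (id ⊗ Y_{β,γ}(w))Y_{α,β+γ}(zw), provided the bilinearity identities (Φ_{α,β}×id)*Θ_{α+β,γ}(z) = Θ_{α,γ}(z)⊗Θ_{β,γ}(z), (id×Φ_{β,γ})*Θ_{α,β+γ}(z) = Θ_{α,β}(z)⊗Θ_{α,γ}(z), w^{deg₁}Θ_{α,β}(z) = Θ_{α,β}(zw), w^{deg₂}Θ_{α,β}(z) = Θ_{α,β}(z/w) hold, together with associativity of Φ and the commutation z^{deg₁}(Φ×id)*w^{deg₁} = (zw)^{deg₁}w^{deg₂}(Φ×id)*. -/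
theorem geometric_weak_coassociativity
    (G A T1 T2 S : Type*) [CommGroup G]
    [CommRing A] [CommRing T1] [CommRing T2] [CommRing S]
    (f1 : A →+* T1) (g1 : T1 →+* S) (f2 : A →+* T2) (g2 : T2 →+* S)
    (E1 : G → T1 ≃+* T1) (F1 : G → T2 ≃+* T2)
    (ε1 ε2 ε3 : G → S ≃+* S)
    (Θ1 : G → T1ˣ) (Θ2 : G → T2ˣ) (Θab Θag Θbg : G → Sˣ)
    -- bilinearity: (Φ_{α,β}×id)*Θ_{α+β,γ}(z) = Θ_{α,γ}(z)⊗Θ_{β,γ}(z)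
    (hbil1 : ∀ z, g1 (Θ1 z : T1) = (Θag z : S) * (Θbg z : S))
    -- bilinearity: (id×Φ_{β,γ})*Θ_{α,β+γ}(z) = Θ_{α,β}(z)⊗Θ_{α,γ}(z)
    (hbil2 : ∀ z, g2 (Θ2 z : T2) = (Θab z : S) * (Θag z : S))
    -- w^{deg₁}Θ(z) = Θ(zw) and w^{deg₂}Θ(z) = Θ(z/w) in each relevant factor
    (hd1ab : ∀ z w, ε1 w (Θab z : S) = (Θab (z * w) : S))
    (hd2ab : ∀ z w, ε2 w (Θab z : S) = (Θab (z * w⁻¹) : S))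
    (hd3ab : ∀ z w, ε3 w (Θab z : S) = (Θab z : S))
    (hd1ag : ∀ z w, ε1 w (Θag z : S) = (Θag (z * w) : S))
    (hd2ag : ∀ z w, ε2 w (Θag z : S) = (Θag z : S))
    (hd3ag : ∀ z w, ε3 w (Θag z : S) = (Θag (z * w⁻¹) : S))
    (hd1bg : ∀ z w, ε1 w (Θbg z : S) = (Θbg z : S))
    (hd2bg : ∀ z w, ε2 w (Θbg z : S) = (Θbg (z * w) : S))
    (hd3bg : ∀ z w, ε3 w (Θbg z : S) = (Θbg (z * w⁻¹) : S))
    -- associativity of the direct sum map Φ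
    (hassoc : g1.comp f1 = g2.comp f2)
    -- z^{deg₁}(Φ×id)* w^{deg₁} = (zw)^{deg₁} w^{deg₂} (Φ×id)*
    (hcomm1 : ∀ z w t, ε1 z (g1 (E1 w t)) = ε1 (z * w) (ε2 w (g1 t)))
    -- (zw)^{deg₁} commutes with (id×Φ)*
    (hcomm2 : ∀ z t, ε1 z (g2 t) = g2 (F1 z t))
    (hcommε : ∀ z w s, ε1 z (ε2 w s) = ε2 w (ε1 z s)) :
    ∀ z w a,
      (Θab z : S) * ε1 z (g1 ((Θ1 w : T1) * E1 w (f1 a)))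
        = (Θbg w : S) * ε2 w (g2 ((Θ2 (z * w) : T2) * F1 (z * w) (f2 a))) := by
  intro z w a
  have hgf : g1 (f1 a) = g2 (f2 a) := congrFun (congrArg (·.toFun) hassoc) a
  rw [map_mul, map_mul, map_mul, map_mul, hbil1, hbil2, map_mul, map_mul,
    hd1ag, hd1bg, hd2ab, hd2ag, hcomm1 z w (f1 a), hgf,
    ← hcomm2 (z * w) (f2 a), hcommε]
  have : z * w * w⁻¹ = z := by group
  rw [this]
  rw [mul_comm w z]; ring
end

section
/- In the example K^{crit}_T(ℂ², xy): the k_T-module M presented by generators g_W, g_x, g_y (classes of O_W, O_{x=0}, O_{y=0}) with single relation g_W = g_x + t₂·g_y (from the exact sequence 0 → t₂O_{x=0} → O_W → O_{y=0} → 0), embedded in k_T = ℤ[t₁^±,t₂^±] via g_W ↦ 1-t₁t₂, g_x ↦ 1-t₁, g_y ↦ 1-t₂, satisfies: the quotient of M by the submodule generated by g_W is isomorphic to k_T/(1 - t₁t₂) via g_y ↦ 1. -/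
/-!
Since `g_W = t₂ g_x + g_y`, the module `M` is generated by `g_W` and `g_y`, so `r ↦ [r g_y]`
maps `k_T` onto `M / (g_W)`, with kernel `{r | r g_y ∈ (g_W)}`. This kernel is `(g_W)` because
`g_y, g_W` is a regular sequence: `g_y = 1 - t₂` is a non-zero-divisor, the kernel of `t₂ ↦ 1`
is `(1 - t₂)`, and `t₂ ↦ 1` sends `g_W` to the non-zero-divisor `1 - t₁`.
-/

open LaurentPolynomial Polynomial Submodule

namespace LaurentPolynomial

variable {R : Type*} [CommRing R]

theorem one_sub_T_one_dvd_iff {f : R[T;T⁻¹]} :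
    (1 - T 1 : R[T;T⁻¹]) ∣ f ↔ eval₂ (RingHom.id R) 1 f = 0 := by
  constructor
  · rintro ⟨g, rfl⟩
    simp [eval₂_T]
  · intro hf
    obtain ⟨n, f', hf'⟩ := f.exists_T_pow
    have hroot : f'.IsRoot 1 := by
      simpa [hf, eval₂_T] using congrArg (eval₂ (RingHom.id R) 1) hf'
    have hdvd : (T 1 - 1 : R[T;T⁻¹]) ∣ toLaurent f' := by
      simpa using map_dvd toLaurent (dvd_iff_isRoot.mpr hroot)
    have hf_eq : f = toLaurent f' * T (-n) := by
      rw [hf', mul_T_assoc, add_neg_cancel, T_zero, mul_one]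
    rw [← neg_sub, neg_dvd, hf_eq]
    exact hdvd.mul_right _

theorem one_sub_T_one_ne_zero [Nontrivial R] : (1 - T 1 : R[T;T⁻¹]) ≠ 0 := by
  intro h
  simpa [T_apply] using congrArg (fun f : R[T;T⁻¹] => f.coeff 0) h

theorem one_sub_T_one_dvd_of_dvd_mul_right {a c : R[T;T⁻¹]}
    (ha : IsRightRegular (eval₂ (RingHom.id R) 1 a)) (h : (1 - T 1 : R[T;T⁻¹]) ∣ c * a) :
    (1 - T 1 : R[T;T⁻¹]) ∣ c := by
  rw [one_sub_T_one_dvd_iff, map_mul] at h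
  rw [one_sub_T_one_dvd_iff]
  exact ha (h.trans (zero_mul _).symm)

end LaurentPolynomial

section QuotientBySpanSingleton

variable {R : Type*} [CommRing R] {J : Submodule R R} {a b : R} (ha : a ∈ J) (hb : b ∈ J)

noncomputable def mkQSMul : R →ₗ[R] J ⧸ (R ∙ (⟨a, ha⟩ : J)) :=
  (R ∙ (⟨a, ha⟩ : J)).mkQ ∘ₗ LinearMap.toSpanSingleton R J ⟨b, hb⟩

theorem mkQSMul_apply (r : R) :
    mkQSMul ha hb r = Submodule.Quotient.mk (r • (⟨b, hb⟩ : J)) :=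
  rfl

theorem mkQSMul_surjective (hJ : J ≤ span R {a, b}) : Function.Surjective (mkQSMul ha hb) := by
  intro q
  obtain ⟨⟨x, hx⟩, rfl⟩ := Submodule.Quotient.mk_surjective _ q
  obtain ⟨c, d, rfl⟩ := mem_span_pair.mp (hJ hx)
  refine ⟨d, (Submodule.Quotient.eq _).mpr (mem_span_singleton.mpr ⟨-c, Subtype.ext ?_⟩)⟩
  simp only [LinearMap.toSpanSingleton_apply, SetLike.val_smul, smul_eq_mul,
    AddSubgroupClass.coe_sub]
  ring

theorem ker_mkQSMul (hb_reg : IsRightRegular b) (hab : ∀ c, b ∣ c * a → b ∣ c) :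
    LinearMap.ker (mkQSMul ha hb) = Ideal.span {a} := by
  ext r
  rw [LinearMap.mem_ker, mkQSMul_apply, Submodule.Quotient.mk_eq_zero, mem_span_singleton,
    Ideal.mem_span_singleton']
  constructor
  · rintro ⟨c, hc⟩
    have hc : c * a = r * b := congrArg Subtype.val hc
    obtain ⟨d, rfl⟩ := hab c (hc ▸ dvd_mul_left b r)
    exact ⟨d, hb_reg (by linear_combination hc)⟩
  · rintro ⟨d, rfl⟩
    exact ⟨d * b, Subtype.ext (by simp only [SetLike.val_smul, smul_eq_mul]; ring)⟩

noncomputable def quotSpanSingletonEquiv (hJ : J ≤ span R {a, b}) (hb_reg : IsRightRegular b)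
    (hab : ∀ c, b ∣ c * a → b ∣ c) : (R ⧸ Ideal.span {a}) ≃ₗ[R] J ⧸ (R ∙ (⟨a, ha⟩ : J)) :=
  (quotEquivOfEq _ _ (ker_mkQSMul ha hb hb_reg hab).symm).trans
    ((mkQSMul ha hb).quotKerEquivOfSurjective (mkQSMul_surjective ha hb hJ))

theorem quotSpanSingletonEquiv_one (hJ : J ≤ span R {a, b}) (hb_reg : IsRightRegular b)
    (hab : ∀ c, b ∣ c * a → b ∣ c) :
    quotSpanSingletonEquiv ha hb hJ hb_reg hab 1 = Submodule.Quotient.mk (⟨b, hb⟩ : J) := by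
  change mkQSMul ha hb 1 = _
  rw [mkQSMul_apply, one_smul]

end QuotientBySpanSingleton

theorem critical_K_theory_C2_xy :
    ∀ (t₁ t₂ : LaurentPolynomial (LaurentPolynomial ℤ)),
      t₁ = LaurentPolynomial.C (LaurentPolynomial.T 1) →
      t₂ = LaurentPolynomial.T 1 →
      ∀ (gW gx gy : LaurentPolynomial (LaurentPolynomial ℤ)),
        gW = 1 - t₁ * t₂ → gx = 1 - t₁ → gy = 1 - t₂ →
        ∀ (M : Submodule (LaurentPolynomial (LaurentPolynomial ℤ))
              (LaurentPolynomial (LaurentPolynomial ℤ)))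
          (hM : M = Submodule.span _ {gW, gx, gy})
          (hgW : gW ∈ M) (hgy : gy ∈ M)
          (P : Submodule (LaurentPolynomial (LaurentPolynomial ℤ)) M),
          P = Submodule.span _ {(⟨gW, hgW⟩ : M)} →
          ∃ e : (@HasQuotient.Quotient M _ Submodule.hasQuotient P) ≃ₗ[LaurentPolynomial (LaurentPolynomial ℤ)]
              (LaurentPolynomial (LaurentPolynomial ℤ) ⧸ Ideal.span {1 - t₁ * t₂}),
            e (Submodule.Quotient.mk (⟨gy, hgy⟩ : M)) = 1 := by
  intro t₁ t₂ ht₁ ht₂ gW gx gy hW hx hy M hM hgW hgy P hP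
  subst hM hP
  rw [← hW]
  have hM_le :
      span (LaurentPolynomial (LaurentPolynomial ℤ)) {gW, gx, gy} ≤ span _ {gW, gy} := by
    rw [span_le]
    rintro _ (rfl | rfl | rfl)
    · exact subset_span (by simp)
    · refine mem_span_pair.mpr ⟨T (-1), -T (-1), ?_⟩
      have hT : (T (-1) * T 1 : LaurentPolynomial (LaurentPolynomial ℤ)) = 1 := by
        rw [← T_add, neg_add_cancel, T_zero]
      rw [hW, hx, hy, ht₁, ht₂, smul_eq_mul, smul_eq_mul]
      linear_combination (1 - C (T 1 : LaurentPolynomial ℤ)) * hT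
    · exact subset_span (by simp)
  have hgy_reg : IsRightRegular gy := by
    rw [hy, ht₂]
    exact (IsRegular.of_ne_zero one_sub_T_one_ne_zero).right
  have hcoprime : ∀ c, gy ∣ c * gW → gy ∣ c := by
    rw [hy, hW, ht₁, ht₂]
    refine fun c => one_sub_T_one_dvd_of_dvd_mul_right ?_
    simpa [eval₂_T, LaurentPolynomial.eval₂_C] using
      (IsRegular.of_ne_zero one_sub_T_one_ne_zero).right
  refine ⟨(quotSpanSingletonEquiv hgW hgy hM_le hgy_reg hcoprime).symm, ?_⟩
  rw [LinearEquiv.symm_apply_eq, quotSpanSingletonEquiv_one]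
end
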